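/- arXiv:2510.18864 — 3 statements merged into one kernel-verified Lean document; each statement's English description precedes it below -/
import Mathlib

section
/- For positive definite real symmetric matrices W and Q of the same size and a real matrix U, the trace norm satisfies ‖√W Q⁻¹ U Q⁻¹ √W‖₁ ≤ ‖Q^{-1/2} W Q^{-1/2}‖₁ · ‖Q^{-1/2} U Q^{-1/2}‖_∞, where ‖·‖₁ is the trace norm (sum of singular values), ‖·‖_∞ the operator norm, and √W, Q^{-1/2} the positive square roots. -/
open Matrix

/-- the positive semidefinite square root (Mathlib's former `Matrix.PosSemidef.sqrt`) -/
noncomputable def Matrix.PosSemidef.sqrt {n : Type*} [Fintype n] [DecidableEq n]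
    {A : Matrix n n ℝ} (hA : A.PosSemidef) : Matrix n n ℝ :=
  hA.1.eigenvectorUnitary.1 * diagonal ((↑) ∘ (Real.sqrt ·) ∘ hA.1.eigenvalues) *
  (star hA.1.eigenvectorUnitary : Matrix n n ℝ)

theorem Matrix.PosSemidef.posSemidef_sqrt {n : Type*} [Fintype n] [DecidableEq n]
    {A : Matrix n n ℝ} (hA : A.PosSemidef) : hA.sqrt.PosSemidef := by
  unfold Matrix.PosSemidef.sqrt
  rw [Matrix.star_eq_conjTranspose]
  apply Matrix.PosSemidef.mul_mul_conjTranspose_same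
  rw [Matrix.posSemidef_diagonal_iff]
  intro i
  simp [Real.sqrt_nonneg]

noncomputable def traceNorm {n : ℕ} (A : Matrix (Fin n) (Fin n) ℝ) : ℝ :=
  (Matrix.posSemidef_conjTranspose_mul_self A).sqrt.trace

noncomputable def singVals {n : ℕ} (A : Matrix (Fin n) (Fin n) ℝ) : Fin n → ℝ :=
  (Matrix.posSemidef_conjTranspose_mul_self A).posSemidef_sqrt.1.eigenvalues

noncomputable def opNorm {n : ℕ} (A : Matrix (Fin n) (Fin n) ℝ) : ℝ :=
  ⨆ i, singVals A i

/-- the positive semidefinite square root, extended by `0` off psd matrices -/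
noncomputable def mySqrt {n : ℕ} (A : Matrix (Fin n) (Fin n) ℝ) : Matrix (Fin n) (Fin n) ℝ :=
  open Classical in
  if h : A.PosSemidef then h.sqrt else 0

/-- the weight-dependent incompatibility measure `T[W]` -/
noncomputable def Tmeas {n : ℕ} (W Q U : Matrix (Fin n) (Fin n) ℝ) : ℝ :=
  traceNorm (mySqrt W * Q⁻¹ * U * Q⁻¹ * mySqrt W) / (W * Q⁻¹).trace

/-- the quantumness measure `R` -/
noncomputable def Rmeas {n : ℕ} (Q U : Matrix (Fin n) (Fin n) ℝ) : ℝ :=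
  opNorm (mySqrt Q⁻¹ * U * mySqrt Q⁻¹)


/-!
Put `M = √W Q^{-1/2}` and `B = Q^{-1/2} U Q^{-1/2}`. Then the left-hand side is `‖M B Mᴴ‖₁`, and
`Q^{-1/2} W Q^{-1/2} = MᴴM` is positive semidefinite, so its trace norm is `tr (MᴴM)`.
Choose right singular vectors `vᵢ` of `S = M B Mᴴ` and unit vectors `uᵢ` along the nonzero `S vᵢ`:
then `‖S‖₁ = ∑ ⟪uᵢ, S vᵢ⟫ = ∑ ⟪Mᴴ uᵢ, B Mᴴ vᵢ⟫ ≤ ‖B‖_∞ ∑ ‖Mᴴ uᵢ‖ ‖Mᴴ vᵢ‖`, and by AM-GM and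
Bessel's inequality for the orthonormal families `(uᵢ)`, `(vᵢ)` the last sum is at most `tr (MᴴM)`.
-/

open scoped RealInnerProductSpace

namespace Matrix

variable {m n : Type*} [Fintype m] [Fintype n] [DecidableEq m] [DecidableEq n]

lemma inner_toEuclideanLin_right (A : Matrix m n ℝ) (x : EuclideanSpace ℝ m)
    (y : EuclideanSpace ℝ n) : ⟪x, A.toEuclideanLin y⟫ = ⟪Aᴴ.toEuclideanLin x, y⟫ := by
  rw [toEuclideanLin_conjTranspose_eq_adjoint, LinearMap.adjoint_inner_left]

lemma norm_toEuclideanLin_sq (A : Matrix m n ℝ) (x : EuclideanSpace ℝ n) :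
    ‖A.toEuclideanLin x‖ ^ 2 = ⟪x, (Aᴴ * A).toEuclideanLin x⟫ := by
  rw [← real_inner_self_eq_norm_sq, inner_toEuclideanLin_right, real_inner_comm,
    toLpLin_mul_same, LinearMap.comp_apply]

lemma norm_toEuclideanLin_eq_of_conjTranspose_mul_self_eq {A B : Matrix m n ℝ}
    (h : Aᴴ * A = Bᴴ * B) (x : EuclideanSpace ℝ n) :
    ‖A.toEuclideanLin x‖ = ‖B.toEuclideanLin x‖ := by
  rw [← sq_eq_sq₀ (norm_nonneg _) (norm_nonneg _), norm_toEuclideanLin_sq,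
    norm_toEuclideanLin_sq, h]

lemma sum_norm_toEuclideanLin_sq_le_trace {ι : Type*} [Fintype ι] (A : Matrix m n ℝ)
    {u : ι → EuclideanSpace ℝ n} (hu : Orthonormal ℝ u) :
    ∑ i, ‖A.toEuclideanLin (u i)‖ ^ 2 ≤ (Aᴴ * A).trace := by
  set e := EuclideanSpace.basisFun m ℝ
  calc ∑ i, ‖A.toEuclideanLin (u i)‖ ^ 2
      = ∑ j, ∑ i, ⟪u i, Aᴴ.toEuclideanLin (e j)⟫ ^ 2 := by
        rw [Finset.sum_comm]
        refine Fintype.sum_congr _ _ fun i => ?_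
        rw [← e.sum_sq_inner_right]
        congr 1 with j
        rw [inner_toEuclideanLin_right, real_inner_comm]
    _ ≤ ∑ j, ‖Aᴴ.toEuclideanLin (e j)‖ ^ 2 := by
        gcongr with j
        simpa using hu.sum_inner_products_le (Aᴴ.toEuclideanLin (e j)) (s := Finset.univ)
    _ = (A * Aᴴ).trace := by
        simp_rw [norm_toEuclideanLin_sq, conjTranspose_conjTranspose]
        rw [← LinearMap.trace_eq_sum_inner]
        exact trace_toLin_eq (A * Aᴴ) (PiLp.basisFun 2 ℝ m)
    _ = (Aᴴ * A).trace := trace_mul_comm _ _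

lemma IsHermitian.toEuclideanLin_eigenvectorBasis {A : Matrix n n ℝ} (hA : A.IsHermitian)
    (i : n) :
    A.toEuclideanLin (hA.eigenvectorBasis i) = hA.eigenvalues i • hA.eigenvectorBasis i := by
  ext1
  simp [toLpLin_apply, hA.mulVec_eigenvectorBasis]

lemma PosSemidef.norm_toEuclideanLin_le_iSup_eigenvalues_mul {R : Matrix n n ℝ}
    (hR : R.PosSemidef) (x : EuclideanSpace ℝ n) :
    ‖R.toEuclideanLin x‖ ≤ (⨆ i, hR.1.eigenvalues i) * ‖x‖ := by
  set b := hR.1.eigenvectorBasis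
  set c := ⨆ i, hR.1.eigenvalues i
  have hc : 0 ≤ c := Real.iSup_nonneg hR.eigenvalues_nonneg
  have hcoord : ∀ i, ⟪b i, R.toEuclideanLin x⟫ = hR.1.eigenvalues i * ⟪b i, x⟫ := fun i => by
    rw [inner_toEuclideanLin_right, hR.1.eq, hR.1.toEuclideanLin_eigenvectorBasis,
      real_inner_smul_left]
  refine (sq_le_sq₀ (norm_nonneg _) (by positivity)).mp ?_
  calc ‖R.toEuclideanLin x‖ ^ 2 = ∑ i, hR.1.eigenvalues i ^ 2 * ⟪b i, x⟫ ^ 2 := by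
        simp_rw [← b.sum_sq_inner_right, hcoord, mul_pow]
    _ ≤ ∑ i, c ^ 2 * ⟪b i, x⟫ ^ 2 := by
        gcongr with i
        · exact hR.eigenvalues_nonneg i
        · exact le_ciSup (Set.finite_range _).bddAbove i
    _ = (c * ‖x‖) ^ 2 := by rw [← Finset.mul_sum, b.sum_sq_inner_right, mul_pow]

open scoped MatrixOrder

lemma PosSemidef.sqrt_eq_cfcSqrt {A : Matrix n n ℝ} (hA : A.PosSemidef) :
    hA.sqrt = CFC.sqrt A := by
  rw [CFC.sqrt_eq_real_sqrt A hA.nonneg, cfcₙ_eq_cfc, hA.1.cfc_eq]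
  rfl

lemma PosSemidef.sqrt_mul_self {A : Matrix n n ℝ} (hA : A.PosSemidef) :
    hA.sqrt * hA.sqrt = A := by
  rw [hA.sqrt_eq_cfcSqrt]
  exact CFC.sqrt_mul_sqrt_self A hA.nonneg

lemma PosSemidef.eq_sqrt_of_mul_self_eq {A B : Matrix n n ℝ} (hA : A.PosSemidef)
    (hB : B.PosSemidef) (h : A * A = B) : A = hB.sqrt := by
  rw [hB.sqrt_eq_cfcSqrt, eq_comm, CFC.sqrt_eq_iff _ _ hB.nonneg hA.nonneg, h]

end Matrix

section

variable {n : ℕ}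

lemma Matrix.PosSemidef.posSemidef_mySqrt {A : Matrix (Fin n) (Fin n) ℝ} (hA : A.PosSemidef) :
    (mySqrt A).PosSemidef := by
  rw [mySqrt, dif_pos hA]
  exact hA.posSemidef_sqrt

lemma Matrix.PosSemidef.mySqrt_mul_self {A : Matrix (Fin n) (Fin n) ℝ} (hA : A.PosSemidef) :
    mySqrt A * mySqrt A = A := by
  rw [mySqrt, dif_pos hA]
  exact hA.sqrt_mul_self

lemma traceNorm_eq_sum_sqrt_eigenvalues (A : Matrix (Fin n) (Fin n) ℝ) :
    traceNorm A = ∑ i, √((posSemidef_conjTranspose_mul_self A).1.eigenvalues i) := by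
  set h := posSemidef_conjTranspose_mul_self A
  rw [traceNorm, PosSemidef.sqrt, trace_mul_cycle,
    mem_unitaryGroup_iff'.mp h.1.eigenvectorUnitary.2, one_mul, trace_diagonal]
  rfl

lemma Matrix.PosSemidef.traceNorm_eq_trace {C : Matrix (Fin n) (Fin n) ℝ} (hC : C.PosSemidef) :
    traceNorm C = C.trace := by
  rw [traceNorm, ← hC.eq_sqrt_of_mul_self_eq _ (by rw [hC.1.eq])]

lemma opNorm_nonneg (A : Matrix (Fin n) (Fin n) ℝ) : 0 ≤ opNorm A :=
  Real.iSup_nonneg (posSemidef_conjTranspose_mul_self A).posSemidef_sqrt.eigenvalues_nonneg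

lemma norm_toEuclideanLin_le_opNorm_mul (B : Matrix (Fin n) (Fin n) ℝ)
    (x : EuclideanSpace ℝ (Fin n)) : ‖B.toEuclideanLin x‖ ≤ opNorm B * ‖x‖ := by
  have h := posSemidef_conjTranspose_mul_self B
  rw [norm_toEuclideanLin_eq_of_conjTranspose_mul_self_eq (B := h.sqrt)]
  · exact h.posSemidef_sqrt.norm_toEuclideanLin_le_iSup_eigenvalues_mul x
  · rw [h.posSemidef_sqrt.1.eq, h.sqrt_mul_self]

lemma exists_orthonormal_traceNorm_eq_sum_inner (S : Matrix (Fin n) (Fin n) ℝ) :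
    ∃ (ι : Type) (_ : Fintype ι) (u v : ι → EuclideanSpace ℝ (Fin n)),
      Orthonormal ℝ u ∧ Orthonormal ℝ v ∧ traceNorm S = ∑ i, ⟪u i, S.toEuclideanLin (v i)⟫ := by
  set h := posSemidef_conjTranspose_mul_self S
  set b := h.1.eigenvectorBasis
  set f := fun i => S.toEuclideanLin (b i)
  have hf : ∀ i j, ⟪f i, f j⟫ = if i = j then h.1.eigenvalues j else 0 := fun i j => by
    rw [inner_toEuclideanLin_right, ← LinearMap.comp_apply, ← toLpLin_mul_same,
      h.1.toEuclideanLin_eigenvectorBasis, real_inner_smul_left,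
      orthonormal_iff_ite.mp b.orthonormal i j]
    split_ifs with hij
    · rw [hij, mul_one]
    · rw [mul_zero]
  have hnorm : ∀ i, √(h.1.eigenvalues i) = ‖f i‖ := fun i => by
    rw [← Real.sqrt_sq (norm_nonneg (f i)), ← real_inner_self_eq_norm_sq, hf, if_pos rfl]
  let u : {i // f i ≠ 0} → EuclideanSpace ℝ (Fin n) := fun i => ‖f i‖⁻¹ • f i
  refine ⟨{i // f i ≠ 0}, inferInstance, u, fun i => b i, ?_,
    b.orthonormal.comp _ Subtype.val_injective, ?_⟩
  · refine ⟨fun i => norm_smul_inv_norm i.2, fun i j hij => ?_⟩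
    simp only [u, real_inner_smul_left, real_inner_smul_right, hf,
      if_neg (Subtype.coe_ne_coe.mpr hij), mul_zero]
  · calc traceNorm S = ∑ i, ‖f i‖ := by simp_rw [traceNorm_eq_sum_sqrt_eigenvalues, hnorm]
      _ = ∑ i : {i // f i ≠ 0}, ‖f i‖ := by
        rw [← Finset.sum_filter_of_ne (p := (f · ≠ 0)) fun i _ hi => norm_ne_zero_iff.mp hi]
        exact Finset.sum_subtype _ (by simp) _
      _ = ∑ i, ⟪u i, S.toEuclideanLin (b i)⟫ := by
        refine Fintype.sum_congr _ _ fun i => ?_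
        rw [real_inner_smul_left, real_inner_self_eq_norm_sq, pow_two,
          inv_mul_cancel_left₀ (norm_ne_zero_iff.mpr i.2)]

lemma sum_inner_mul_mul_conjTranspose_le {m ι : Type*} [Fintype m] [DecidableEq m] [Fintype ι]
    (M : Matrix m (Fin n) ℝ) (B : Matrix (Fin n) (Fin n) ℝ) {u v : ι → EuclideanSpace ℝ m}
    (hu : Orthonormal ℝ u) (hv : Orthonormal ℝ v) :
    ∑ i, ⟪u i, (M * B * Mᴴ).toEuclideanLin (v i)⟫ ≤ (Mᴴ * M).trace * opNorm B := by
  have ha := sum_norm_toEuclideanLin_sq_le_trace Mᴴ hu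
  have hb := sum_norm_toEuclideanLin_sq_le_trace Mᴴ hv
  rw [conjTranspose_conjTranspose, trace_mul_comm] at ha hb
  set a := fun i => ‖Mᴴ.toEuclideanLin (u i)‖
  set b := fun i => ‖Mᴴ.toEuclideanLin (v i)‖
  have hterm : ∀ i, ⟪u i, (M * B * Mᴴ).toEuclideanLin (v i)⟫ ≤ opNorm B * (a i * b i) := fun i =>
    calc ⟪u i, (M * B * Mᴴ).toEuclideanLin (v i)⟫
        = ⟪Mᴴ.toEuclideanLin (u i), B.toEuclideanLin (Mᴴ.toEuclideanLin (v i))⟫ := by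
          rw [toLpLin_mul_same, toLpLin_mul_same, LinearMap.comp_apply, LinearMap.comp_apply,
            inner_toEuclideanLin_right]
      _ ≤ a i * (opNorm B * b i) :=
          (real_inner_le_norm _ _).trans
            (mul_le_mul_of_nonneg_left (norm_toEuclideanLin_le_opNorm_mul _ _) (norm_nonneg _))
      _ = opNorm B * (a i * b i) := by ring
  have hab : ∑ i, a i * b i ≤ (Mᴴ * M).trace := by
    have hAMGM : 2 * ∑ i, a i * b i ≤ ∑ i, a i ^ 2 + ∑ i, b i ^ 2 := by
      rw [Finset.mul_sum, ← Finset.sum_add_distrib]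
      exact Finset.sum_le_sum fun i _ => by linarith [two_mul_le_add_sq (a i) (b i)]
    linarith
  calc ∑ i, ⟪u i, (M * B * Mᴴ).toEuclideanLin (v i)⟫ ≤ ∑ i, opNorm B * (a i * b i) :=
        Finset.sum_le_sum fun i _ => hterm i
    _ = opNorm B * ∑ i, a i * b i := by rw [Finset.mul_sum]
    _ ≤ opNorm B * (Mᴴ * M).trace := mul_le_mul_of_nonneg_left hab (opNorm_nonneg B)
    _ = (Mᴴ * M).trace * opNorm B := mul_comm _ _

lemma traceNorm_mul_mul_conjTranspose_le (M B : Matrix (Fin n) (Fin n) ℝ) :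
    traceNorm (M * B * Mᴴ) ≤ (Mᴴ * M).trace * opNorm B := by
  obtain ⟨ι, _, u, v, hu, hv, h⟩ := exists_orthonormal_traceNorm_eq_sum_inner (M * B * Mᴴ)
  exact h ▸ sum_inner_mul_mul_conjTranspose_le M B hu hv

lemma traceNorm_mul_mul_le_of_mul_self_eq {a b A B : Matrix (Fin n) (Fin n) ℝ}
    (ha : a.IsHermitian) (hb : b.IsHermitian) (hA : a * a = A) (hB : b * b = B)
    (U : Matrix (Fin n) (Fin n) ℝ) :
    traceNorm (a * B * U * B * a) ≤ traceNorm (b * A * b) * opNorm (b * U * b) := by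
  subst hA hB
  have hMM : (a * b)ᴴ * (a * b) = b * (a * a) * b := by
    rw [conjTranspose_mul, ha.eq, hb.eq]
    simp only [mul_assoc]
  have hMBM : a * (b * b) * U * (b * b) * a = (a * b) * (b * U * b) * (a * b)ᴴ := by
    rw [conjTranspose_mul, ha.eq, hb.eq]
    simp only [mul_assoc]
  rw [hMBM, ← hMM, (posSemidef_conjTranspose_mul_self _).traceNorm_eq_trace]
  exact traceNorm_mul_mul_conjTranspose_le _ _

end

/-- Hölder-type inequality: ‖√W Q⁻¹ U Q⁻¹ √W‖₁ ≤ ‖Q^{-1/2} W Q^{-1/2}‖₁ · ‖Q^{-1/2} U Q^{-1/2}‖_∞ -/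
theorem traceNorm_holder {n : ℕ} (W Q U : Matrix (Fin n) (Fin n) ℝ)
    (hW : W.PosDef) (hQ : Q.PosDef) :
    traceNorm (mySqrt W * Q⁻¹ * U * Q⁻¹ * mySqrt W) ≤
      traceNorm (mySqrt Q⁻¹ * W * mySqrt Q⁻¹) * opNorm (mySqrt Q⁻¹ * U * mySqrt Q⁻¹) :=
  traceNorm_mul_mul_le_of_mul_self_eq hW.posSemidef.posSemidef_mySqrt.1
    hQ.inv.posSemidef.posSemidef_mySqrt.1 hW.posSemidef.mySqrt_mul_self
    hQ.inv.posSemidef.mySqrt_mul_self U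
end

section
/- For a 2×2 real antisymmetric matrix U with det U ≠ 0, a 2×2 real symmetric positive definite matrix Q, and diagonal weight W = diag(1, ω) with ω > 0: the equation T[W] = R, i.e. 2√(ω det U)/(Q₂₂ + ω Q₁₁) = √(det U / det Q), has a solution ω > 0 if and only if Q₁₂ = 0. -/
open Matrix

/-! Both sides of the equation are positive, so it is equivalent to its square
`4 ω det Q = (Q₂₂ + ω Q₁₁)²`. Since
`(Q₂₂ + ω Q₁₁)² - 4 ω (Q₁₁ Q₂₂ - Q₁₂²) = (Q₂₂ - ω Q₁₁)² + 4 ω Q₁₂²`,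
this holds exactly when `Q₁₂ = 0` and `ω = Q₂₂ / Q₁₁`. -/

theorem Matrix.IsSymm.det_fin_two {R : Type*} [CommRing R] {A : Matrix (Fin 2) (Fin 2) R}
    (hA : A.IsSymm) : A.det = A 0 0 * A 1 1 - A 0 1 ^ 2 := by
  rw [Matrix.det_fin_two, hA.apply 0 1]
  ring

theorem two_mul_sqrt_mul_sq_div_eq_sqrt_sq_div_iff {ω D d u : ℝ} (hω : 0 ≤ ω) (hD : 0 < D)
    (hd : 0 < d) (hu : u ≠ 0) :
    2 * √(ω * u ^ 2) / D = √(u ^ 2 / d) ↔ 4 * ω * d = D ^ 2 := by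
  have hlhs : 2 * √(ω * u ^ 2) / D = √(4 * ω * u ^ 2 / D ^ 2) := by
    rw [Real.sqrt_div' _ (sq_nonneg D), Real.sqrt_sq hD.le,
      show 4 * ω * u ^ 2 = 2 ^ 2 * (ω * u ^ 2) by ring, Real.sqrt_mul (sq_nonneg 2),
      Real.sqrt_sq zero_le_two]
  rw [hlhs, Real.sqrt_inj (by positivity) (by positivity),
    div_eq_div_iff (by positivity) hd.ne', mul_right_comm, mul_comm (u ^ 2), mul_left_inj' (pow_ne_zero 2 hu)]

theorem four_mul_mul_sub_sq_eq_add_sq_iff {a b c ω : ℝ} (hω : 0 < ω) :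
    4 * ω * (a * c - b ^ 2) = (c + ω * a) ^ 2 ↔ b = 0 ∧ c = ω * a := by
  have hsos : (c + ω * a) ^ 2 - 4 * ω * (a * c - b ^ 2) = (c - ω * a) ^ 2 + 4 * ω * b ^ 2 := by
    ring
  constructor
  · intro h
    have hsum : (c - ω * a) ^ 2 + 4 * ω * b ^ 2 = 0 := by linarith
    obtain ⟨hc, hb⟩ := (add_eq_zero_iff_of_nonneg (sq_nonneg _) (by positivity)).mp hsum
    exact ⟨by simpa [hω.ne'] using hb, by simpa [sub_eq_zero] using hc⟩
  · rintro ⟨rfl, rfl⟩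
    ring

/-- For 2×2 antisymmetric U (det U = u² ≠ 0) and positive definite Q, the equation
T[diag(1,ω)] = R has a solution ω > 0 if and only if Q₁₂ = 0. -/
theorem Tmeas_eq_Rmeas_diag_weight_iff (Q : Matrix (Fin 2) (Fin 2) ℝ) (hQ : Q.PosDef)
    (u : ℝ) (hu : u ≠ 0) :
    (∃ ω : ℝ, 0 < ω ∧
        2 * Real.sqrt (ω * u ^ 2) / (Q 1 1 + ω * Q 0 0) =
          Real.sqrt (u ^ 2 / Q.det)) ↔ Q 0 1 = 0 := by
  have h00 : 0 < Q 0 0 := hQ.diag_pos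
  have h11 : 0 < Q 1 1 := hQ.diag_pos
  have hdet : Q.det = Q 0 0 * Q 1 1 - Q 0 1 ^ 2 :=
    (isHermitian_iff_isSymm.mp hQ.isHermitian).det_fin_two
  have hdet_pos : 0 < Q.det := hQ.det_pos
  constructor
  · rintro ⟨ω, hω, h⟩
    rw [two_mul_sqrt_mul_sq_div_eq_sqrt_sq_div_iff hω.le (by positivity) hdet_pos hu, hdet,
      four_mul_mul_sub_sq_eq_add_sq_iff hω] at h
    exact h.1
  · intro h01
    refine ⟨Q 1 1 / Q 0 0, by positivity, ?_⟩
    rw [two_mul_sqrt_mul_sq_div_eq_sqrt_sq_div_iff (by positivity) (by positivity) hdet_pos hu,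
      hdet, four_mul_mul_sub_sq_eq_add_sq_iff (by positivity)]
    exact ⟨h01, by field_simp⟩
end

section
/- For a 2×2 real antisymmetric matrix U with det U ≠ 0, a 2×2 real symmetric positive definite matrix Q, and non-diagonal weight W = [[1, ω₁],[ω₁, ω₂]] positive definite, the equality 2√((ω₂ − ω₁²) det U)/(Q₂₂ + ω₂Q₁₁ − 2ω₁Q₁₂) = √(det U / det Q) has a unique real solution (ω₁, ω₂) given by ω₂ = Q₂₂/Q₁₁ and ω₁ = Q₁₂/Q₁₁; equivalently, T[W] = R if and only if W = Q/Q₁₁. -/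
open Matrix

private lemma sos_aux (s p m d : ℝ) (hp : 0 ≤ p) (hm : 0 < m) (hd : 0 < d)
    (h : s ^ 2 + p ^ 2 + 2 * p * m + 2 * p * d = 0) : p = 0 ∧ s = 0 := by
  constructor <;> nlinarith [sq_nonneg s, sq_nonneg p]

/-- For a non-diagonal weight W = [[1,ω₁],[ω₁,ω₂]] (positive definite), the equality
T[W] = R holds if and only if ω₁ = Q₁₂/Q₁₁ and ω₂ = Q₂₂/Q₁₁, i.e. W = Q/Q₁₁. -/
theorem Tmeas_eq_Rmeas_nondiag_weight_iff (Q : Matrix (Fin 2) (Fin 2) ℝ) (hQ : Q.PosDef)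
    (u : ℝ) (hu : u ≠ 0) (ω₁ ω₂ : ℝ) (hW : ω₁ ^ 2 < ω₂) :
    (2 * Real.sqrt ((ω₂ - ω₁ ^ 2) * u ^ 2) / (Q 1 1 + ω₂ * Q 0 0 - 2 * ω₁ * Q 0 1) =
        Real.sqrt (u ^ 2 / Q.det)) ↔
      (ω₁ = Q 0 1 / Q 0 0 ∧ ω₂ = Q 1 1 / Q 0 0) := by
  have hsym : Q 1 0 = Q 0 1 := by
    have h := hQ.1
    have := congrFun (congrFun h 0) 1
    simpa [Matrix.conjTranspose_apply] using this
  have hdet : Q.det = Q 0 0 * Q 1 1 - Q 0 1 * Q 0 1 := by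
    rw [Matrix.det_fin_two, hsym]
  have hd : 0 < Q.det := hQ.det_pos
  have ha : 0 < Q 0 0 := by
    have h := hQ.re_dotProduct_pos (x := Pi.single 0 1) (by
      intro h; simpa using congrFun h 0)
    simpa [dotProduct, Matrix.mulVec, Fin.sum_univ_two, Pi.single_apply] using h
  set a := Q 0 0 with hA
  set b := Q 0 1 with hB
  set c := Q 1 1 with hC
  have hd' : 0 < a * c - b * b := hdet ▸ hd
  have hane : a ≠ 0 := ne_of_gt ha
  have hu2 : (0:ℝ) < u ^ 2 := by positivity
  have ht : 0 < ω₂ - ω₁ ^ 2 := by linarith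
  constructor
  · intro heq
    have hrhs : 0 < Real.sqrt (u ^ 2 / Q.det) := Real.sqrt_pos.2 (by positivity)
    have hnum : 0 < Real.sqrt ((ω₂ - ω₁ ^ 2) * u ^ 2) := Real.sqrt_pos.2 (by positivity)
    have hD : 0 < c + ω₂ * a - 2 * ω₁ * b := by
      by_contra hle
      push_neg at hle
      rcases lt_or_eq_of_le hle with hlt | heq0
      · have hneg : 2 * Real.sqrt ((ω₂ - ω₁ ^ 2) * u ^ 2) / (c + ω₂ * a - 2 * ω₁ * b) < 0 :=
          div_neg_of_pos_of_neg (by linarith) hlt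
        rw [heq] at hneg
        linarith
      · rw [heq0, div_zero] at heq
        rw [← heq] at hrhs
        exact lt_irrefl 0 hrhs
    have h2 : 2 * Real.sqrt ((ω₂ - ω₁ ^ 2) * u ^ 2) =
        Real.sqrt (u ^ 2 / Q.det) * (c + ω₂ * a - 2 * ω₁ * b) :=
      (div_eq_iff (ne_of_gt hD)).mp heq
    have hsq := congrArg (· ^ 2) h2
    rw [mul_pow, mul_pow, Real.sq_sqrt (by positivity : (0:ℝ) ≤ (ω₂ - ω₁ ^ 2) * u ^ 2),
      Real.sq_sqrt (by positivity : (0:ℝ) ≤ u ^ 2 / Q.det), hdet] at hsq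
    rw [div_mul_eq_mul_div, eq_div_iff (ne_of_gt hd')] at hsq
    have h4 : (4 * (ω₂ - ω₁ ^ 2) * (a * c - b * b)) * u ^ 2 =
        ((c + ω₂ * a - 2 * ω₁ * b) ^ 2) * u ^ 2 := by linear_combination hsq
    have hkey : 4 * (ω₂ - ω₁ ^ 2) * (a * c - b * b) = (c + ω₂ * a - 2 * ω₁ * b) ^ 2 :=
      mul_right_cancel₀ (ne_of_gt hu2) h4
    have hzero : (a ^ 2 * (ω₂ - ω₁ ^ 2) - (a * c - b * b)) ^ 2 + ((a * ω₁ - b) ^ 2) ^ 2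
          + 2 * ((a * ω₁ - b) ^ 2) * (a ^ 2 * (ω₂ - ω₁ ^ 2))
          + 2 * ((a * ω₁ - b) ^ 2) * (a * c - b * b) = 0 := by
      linear_combination (-(a ^ 2)) * hkey
    obtain ⟨hp, hs⟩ := sos_aux _ _ _ _ (sq_nonneg _) (by positivity) hd' hzero
    have hp' : a * ω₁ - b = 0 := by
      exact pow_eq_zero_iff (by norm_num) |>.mp hp
    have hω₁ : ω₁ = b / a := by
      rw [eq_div_iff hane]
      linear_combination hp'
    refine ⟨hω₁, ?_⟩
    rw [eq_div_iff hane]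
    have hz : a * (ω₂ * a - c) = 0 := by linear_combination hs + (a * ω₁ + b) * hp'
    rcases mul_eq_zero.mp hz with h | h
    · exact absurd h hane
    · linarith
  · rintro ⟨h1, h2⟩
    subst h1 h2
    set s := Real.sqrt (a * c - b * b) with hS
    have hs2 : s ^ 2 = a * c - b * b := Real.sq_sqrt hd'.le
    have hspos : 0 < s := Real.sqrt_pos.2 hd'
    have e1 : (c / a - (b / a) ^ 2) * u ^ 2 = (s * |u| / a) ^ 2 := by
      have e0 : (s * |u| / a) ^ 2 = (a * c - b * b) * u ^ 2 / a ^ 2 := by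
        rw [div_pow, mul_pow, sq_abs, hs2]
      rw [e0]
      field_simp
    have e2 : u ^ 2 / Q.det = (|u| / s) ^ 2 := by
      rw [div_pow, sq_abs, hs2, hdet]
    rw [e1, e2, Real.sqrt_sq (by positivity), Real.sqrt_sq (by positivity)]
    have hden : c + c / a * a - 2 * (b / a) * b = 2 * (a * c - b * b) / a := by
      field_simp; ring
    rw [hden]
    rw [div_eq_div_iff (by positivity) (ne_of_gt hspos)]
    field_simp
    linear_combination hs2
end
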